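/- Let μ be a dominant integral coweight, let w₁ ∈ W₀ be a minimal coset representative for μ, and let w_* ∈ W₀ be the unique element such that the alcove −μ + A is contained in the Weyl chamber w_*(C). Then ℓ(t_{−w₁(μ)}w₁) = ℓ(w₁w_*) + ℓ(w_*^{−1}t_{−μ}), where ℓ(w₁w_*) is the length in W₀ (the number of α ∈ Φ⁺ with (w₁w_*)(α) ∈ −Φ⁺), and the other two lengths are the separating-hyperplane counts for the corresponding affine transformations (here w_*^{−1}t_{−μ} is the affine map v ↦ w_*^{−1}(v) − w_*^{−1}(μ)). -/

import Mathlib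

/-!
Common framework: a finite crystallographic reduced root system `Φ` inside the dual
of a finite-dimensional real vector space `V`, with a choice of positive roots `Pos`,
simple roots `Delta`, coroots, and the finite Weyl group `W` (a subgroup of linear
automorphisms of `V` generated by the root reflections).  We also set up affine
hyperplanes, the fundamental alcove, separation counts, and alcove walks.
-/

open Module Finset

section BasicDefs

variable {V : Type*} [AddCommGroup V] [Module ℝ V]

/-- The affine transformation `t_ν u : v ↦ u(v) + ν`. -/
def affT (ν : V) (u : V ≃ₗ[ℝ] V) : V → V := fun v => u v + ν

/-- The affine hyperplane `H_{α,n} = {v : ⟨α, v⟩ = n}`. -/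
def affHyp (α : Dual ℝ V) (n : ℤ) : Set V := {v | α v = (n : ℝ)}

/-- `H_{α,n}` separates `S` and `T`: the affine functional `⟨α, ·⟩ - n` is strictly
positive everywhere on one of the two sets and strictly negative everywhere on the other. -/
def SepBy (α : Dual ℝ V) (n : ℤ) (S T : Set V) : Prop :=
  ((∀ v ∈ S, α v < (n : ℝ)) ∧ ∀ v ∈ T, (n : ℝ) < α v) ∨
  ((∀ v ∈ S, (n : ℝ) < α v) ∧ ∀ v ∈ T, α v < (n : ℝ))

/-- The contragredient action of `w` on `V*`:  `(w · α)(v) = α (w⁻¹ v)`. -/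
def dAct (w : V ≃ₗ[ℝ] V) (α : Dual ℝ V) : Dual ℝ V := α.comp w.symm.toLinearMap

end BasicDefs

/-- A finite crystallographic reduced root system spanning the dual of `V`, together
with a system of positive roots, the simple roots, the coroots and the Weyl group. -/
structure RootSystemCtx (V : Type*) [AddCommGroup V] [Module ℝ V]
    [FiniteDimensional ℝ V] where
  Φ : Finset (Dual ℝ V)
  Pos : Finset (Dual ℝ V)
  Delta : Finset (Dual ℝ V)
  coroot : Dual ℝ V → V
  W : Subgroup (V ≃ₗ[ℝ] V)
  pos_subset : Pos ⊆ Φ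
  delta_subset : Delta ⊆ Pos
  root_ne_zero : ∀ α ∈ Φ, α ≠ 0
  span_eq_top : Submodule.span ℝ (Φ : Set (Dual ℝ V)) = ⊤
  pos_partition : ∀ α ∈ Φ, (α ∈ Pos ∧ -α ∉ Pos) ∨ (-α ∈ Pos ∧ α ∉ Pos)
  coroot_self : ∀ α ∈ Φ, α (coroot α) = 2
  crystallographic : ∀ α ∈ Φ, ∀ β ∈ Φ, ∃ n : ℤ, β (coroot α) = (n : ℝ)
  reduced : ∀ α ∈ Φ, ∀ c : ℝ, c • α ∈ Φ → c = 1 ∨ c = -1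
  root_reflect_mem : ∀ α ∈ Φ, ∀ β ∈ Φ, β - β (coroot α) • α ∈ Φ
  delta_indep : LinearIndependent ℝ (fun x : {a : Dual ℝ V // a ∈ Delta} => x.1)
  pos_of_delta : ∀ α ∈ Pos, ∃ c : Dual ℝ V → ℕ, α = ∑ β ∈ Delta, (c β : ℝ) • β
  W_gen : W = Subgroup.closure
    {g : V ≃ₗ[ℝ] V | ∃ α ∈ Φ, ∀ v : V, g v = v - α v • coroot α}

namespace RootSystemCtx

variable {V : Type*} [AddCommGroup V] [Module ℝ V] [FiniteDimensional ℝ V]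

section CtxDefs

variable (C : RootSystemCtx V)

/-- `ρ`, the half sum of the positive roots. -/
noncomputable def rho : Dual ℝ V := (2⁻¹ : ℝ) • ∑ α ∈ C.Pos, α

open Classical in
/-- The inversion set `{α ∈ Φ⁺ : w(α) ∈ -Φ⁺}` of `w`. -/
noncomputable def invSet (w : V ≃ₗ[ℝ] V) : Finset (Dual ℝ V) :=
  C.Pos.filter fun α => -(dAct w α) ∈ C.Pos

/-- The length `ℓ(w) = #{α ∈ Φ⁺ : w(α) ∈ -Φ⁺}`. -/
noncomputable def len (w : V ≃ₗ[ℝ] V) : ℕ := (C.invSet w).card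

/-- `lam` is an integral coweight: `⟨α, lam⟩ ∈ ℤ` for all roots `α`. -/
def IsIntegral (lam : V) : Prop := ∀ α ∈ C.Φ, ∃ n : ℤ, α lam = (n : ℝ)

/-- `lam` is dominant: `⟨α, lam⟩ ≥ 0` for all positive roots `α`. -/
def IsDominant (lam : V) : Prop := ∀ α ∈ C.Pos, 0 ≤ α lam

/-- `w` is a minimal(-length) coset representative for `lam`, i.e. `w ∈ W₀` and
`ℓ(w) ≤ ℓ(v)` for every `v ∈ w W_{0,lam}`. -/
def IsMinRep (w : V ≃ₗ[ℝ] V) (lam : V) : Prop :=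
  w ∈ C.W ∧ ∀ u ∈ C.W, u lam = lam → C.len w ≤ C.len (w * u)

/-- The (open) fundamental alcove `A`. -/
def alcove : Set V := {v | ∀ α ∈ C.Pos, 0 < α v ∧ α v < 1}

/-- The closure of the fundamental alcove. -/
def closedAlcove : Set V := {v | ∀ α ∈ C.Pos, 0 ≤ α v ∧ α v ≤ 1}

/-- The open dominant Weyl chamber `C`. -/
def chamber : Set V := {v | ∀ α ∈ C.Pos, 0 < α v}

/-- The number of affine hyperplanes `H_{α,n}` (`α ∈ Φ⁺`, `n ∈ ℤ`) separating `S` and `T`. -/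
noncomputable def sepCount (S T : Set V) : ℕ :=
  Set.ncard {p : Dual ℝ V × ℤ | p.1 ∈ C.Pos ∧ SepBy p.1 p.2 S T}

/-- The length of an affine transformation: the number of affine hyperplanes
separating `A` and `f(A)`. -/
noncomputable def affLen (f : V → V) : ℕ := C.sepCount C.alcove (f '' C.alcove)

/-- The coroot lattice `Q^∨`. -/
def Qv : AddSubgroup V := AddSubgroup.closure (C.coroot '' (C.Φ : Set (Dual ℝ V)))

/-- `b` is an alcove: a transform of the fundamental alcove under the affine Weyl
group `Q^∨ ⋊ W₀`. -/
def IsAlcoveSet (b : Set V) : Prop := ∃ ν ∈ C.Qv, ∃ u ∈ C.W, b = affT ν u '' C.alcove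

/-- The affine reflection through the hyperplane `H_{α,n}`. -/
def reflH (α : Dual ℝ V) (n : ℤ) : V → V := fun v => v - (α v - (n : ℝ)) • C.coroot α

/-- `H_{α,n}` (with `α ∈ Φ⁺`) supports a codimension-one face of the alcove `b`:
it is the unique affine hyperplane separating `b` from its reflection through `H_{α,n}`. -/
def IsWall (α : Dual ℝ V) (n : ℤ) (b : Set V) : Prop :=
  α ∈ C.Pos ∧ SepBy α n b (C.reflH α n '' b) ∧
    ∀ β ∈ C.Pos, ∀ m : ℤ, SepBy β m b (C.reflH α n '' b) → β = α ∧ m = n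

open Classical in
/-- `Φ_M = Φ ∩ ℤΔ_M`, the roots of the Levi attached to `Δ_M ⊆ Δ`. -/
noncomputable def PhiM (ΔM : Finset (Dual ℝ V)) : Finset (Dual ℝ V) :=
  C.Φ.filter fun α => α ∈ Submodule.span ℤ (ΔM : Set (Dual ℝ V))

/-- `W_{0,M}`, the subgroup of `W₀` generated by the reflections in the roots of `Φ_M`. -/
def WM (ΔM : Finset (Dual ℝ V)) : Subgroup (V ≃ₗ[ℝ] V) :=
  Subgroup.closure {g : V ≃ₗ[ℝ] V | ∃ α ∈ C.PhiM ΔM, ∀ v : V, g v = v - α v • C.coroot α}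

/-- `lam` is `M`-dominant: `⟨β, lam⟩ ≥ 0` for every `β ∈ Φ_M⁺ = Φ_M ∩ Φ⁺`. -/
def IsMDominant (ΔM : Finset (Dual ℝ V)) (lam : V) : Prop :=
  ∀ β, β ∈ C.PhiM ΔM → β ∈ C.Pos → 0 ≤ β lam

end CtxDefs

/-- An alcove walk of length `len`, starting at the fundamental alcove: at each step
`i < len` we are given a wall `H_{root i, lev i}` of the alcove `alc i`, and
`alc (i+1)` is either `alc i` (a folding) or its reflection through that wall (a crossing). -/
structure Walk (C : RootSystemCtx V) where
  len : ℕ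
  alc : ℕ → Set V
  root : ℕ → Dual ℝ V
  lev : ℕ → ℤ
  start : alc 0 = C.alcove
  isAlcove : ∀ i ≤ len, C.IsAlcoveSet (alc i)
  wall : ∀ i < len, C.IsWall (root i) (lev i) (alc i)
  step : ∀ i < len, alc (i + 1) = alc i ∨ alc (i + 1) = C.reflH (root i) (lev i) '' alc i

namespace Walk

variable {C : RootSystemCtx V}

/-- Step `i` is a folding. -/
def IsFolding (Wk : Walk C) (i : ℕ) : Prop := Wk.alc (i + 1) = Wk.alc i

/-- Step `i` is a crossing. -/
def IsCrossing (Wk : Walk C) (i : ℕ) : Prop := Wk.alc (i + 1) ≠ Wk.alc i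

/-- The affine functional of step `i` is positive on the current alcove
(positivity for the dominant orientation). -/
def PosAt (Wk : Walk C) (i : ℕ) : Prop := ∀ v ∈ Wk.alc i, (Wk.lev i : ℝ) < Wk.root i v

/-- The affine functional of step `i` is negative on the current alcove. -/
def NegAt (Wk : Walk C) (i : ℕ) : Prop := ∀ v ∈ Wk.alc i, Wk.root i v < (Wk.lev i : ℝ)

open Classical in
/-- `c⁺`: the number of crossings positive for the dominant orientation. -/
noncomputable def cPlus (Wk : Walk C) : ℕ :=
  ((Finset.range Wk.len).filter fun i => Wk.IsCrossing i ∧ Wk.PosAt i).card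

open Classical in
/-- `f⁺`: the number of foldings. -/
noncomputable def fPlus (Wk : Walk C) : ℕ :=
  ((Finset.range Wk.len).filter fun i => Wk.IsFolding i).card

/-- Positively folded for the dominant orientation. -/
def PosFolded (Wk : Walk C) : Prop := ∀ i < Wk.len, Wk.IsFolding i → Wk.NegAt i

/-- Positivity of step `i` for the parabolic orientation attached to the Levi root
set `ΦM`: for `α ∉ Φ_M` positivity on the current alcove; for `α ∈ Φ_M` the sign on
the current alcove agrees with the sign on the fundamental alcove. -/
def PosAtP (Wk : Walk C) (ΦM : Finset (Dual ℝ V)) (i : ℕ) : Prop :=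
  (Wk.root i ∉ ΦM ∧ Wk.PosAt i) ∨
  (Wk.root i ∈ ΦM ∧
    ((Wk.PosAt i ∧ ∀ v ∈ C.alcove, (Wk.lev i : ℝ) < Wk.root i v) ∨
     (Wk.NegAt i ∧ ∀ v ∈ C.alcove, Wk.root i v < (Wk.lev i : ℝ))))

/-- Negativity of step `i` for the parabolic orientation attached to `ΦM`. -/
def NegAtP (Wk : Walk C) (ΦM : Finset (Dual ℝ V)) (i : ℕ) : Prop :=
  (Wk.root i ∉ ΦM ∧ Wk.NegAt i) ∨
  (Wk.root i ∈ ΦM ∧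
    ((Wk.PosAt i ∧ ∀ v ∈ C.alcove, Wk.root i v < (Wk.lev i : ℝ)) ∨
     (Wk.NegAt i ∧ ∀ v ∈ C.alcove, (Wk.lev i : ℝ) < Wk.root i v)))

open Classical in
/-- `c⁺` for the parabolic orientation attached to `ΦM`. -/
noncomputable def cPlusP (Wk : Walk C) (ΦM : Finset (Dual ℝ V)) : ℕ :=
  ((Finset.range Wk.len).filter fun i => Wk.IsCrossing i ∧ Wk.PosAtP ΦM i).card

/-- Positively folded for the parabolic orientation attached to `ΦM`. -/
def PosFoldedP (Wk : Walk C) (ΦM : Finset (Dual ℝ V)) : Prop :=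
  ∀ i < Wk.len, Wk.IsFolding i → Wk.NegAtP ΦM i

/-- A minimal gallery from the fundamental alcove to `b`: all steps are crossings,
it ends at `b`, and its length is the number of hyperplanes separating `A` and `b`. -/
def IsMinGallery (Wk : Walk C) (b : Set V) : Prop :=
  (∀ i < Wk.len, Wk.IsCrossing i) ∧ Wk.alc Wk.len = b ∧
    Wk.len = C.sepCount C.alcove b

/-- Two walks have the same type: same length and, at each step, the pullbacks of the
crossed/folded hyperplanes to the fundamental alcove coincide. -/
def SameType (Wk G : Walk C) : Prop :=
  Wk.len = G.len ∧ ∀ i < Wk.len,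
    ∃ ν₁ ∈ C.Qv, ∃ u₁ ∈ C.W, ∃ ν₂ ∈ C.Qv, ∃ u₂ ∈ C.W,
      Wk.alc i = affT ν₁ u₁ '' C.alcove ∧ G.alc i = affT ν₂ u₂ '' C.alcove ∧
      affT ν₁ u₁ ⁻¹' affHyp (Wk.root i) (Wk.lev i) =
        affT ν₂ u₂ ⁻¹' affHyp (G.root i) (G.lev i)

/-- The walk terminates at `v₀`: `v₀` lies in the closure of the final alcove. -/
def Terminates (Wk : Walk C) (v₀ : V) : Prop :=
  ∃ ν ∈ C.Qv, ∃ u ∈ C.W, Wk.alc Wk.len = affT ν u '' C.alcove ∧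
    v₀ ∈ affT ν u '' C.closedAlcove

/-- Two walks are equal as walks: same length and identical sequences of alcoves,
roots and levels. -/
def Equiv (Wk Wk' : Walk C) : Prop :=
  Wk.len = Wk'.len ∧ (∀ i ≤ Wk.len, Wk.alc i = Wk'.alc i) ∧
    ∀ i < Wk.len, Wk.root i = Wk'.root i ∧ Wk.lev i = Wk'.lev i

end Walk

end RootSystemCtx

/-!
Counting the hyperplanes `H_{α,n}` that separate `A` from `t_ν u (A)` root by root, and then
reindexing by `β = ±u⁻¹(α) > 0`, gives `ℓ(t_{-u(μ)} u) = ∑_{β > 0} |⟨β, μ⟩ - [u(β) < 0]|`.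
Minimality of `w₁` forces `⟨β, μ⟩ ≠ 0` for every inversion `β` of `w₁` (otherwise the
reflection `s_β` fixes `μ` and shortens `w₁`), while the chamber condition says that the
inversions of `w_*⁻¹` are exactly the `β > 0` with `⟨β, μ⟩ ≠ 0`. So for `u = w₁` and for
`u = w_*⁻¹` the affine length is `∑_{β > 0} ⟨β, μ⟩ - ℓ(u)`. Finally, with `N(u)` the inversion
set, `N(w₁) ⊆ N(w_*⁻¹)` gives `ℓ(w₁ w_*) = #(N(w₁) ∆ N(w_*⁻¹)) = ℓ(w_*⁻¹) - ℓ(w₁)`.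
-/

open scoped symmDiff

lemma ncard_setOf_fst_mem_and_snd_mem {ι κ : Type*} (s : Finset ι) (t : ι → Finset κ) :
    {p : ι × κ | p.1 ∈ s ∧ p.2 ∈ t p.1}.ncard = ∑ i ∈ s, (t i).card := by
  classical
  have : {p : ι × κ | p.1 ∈ s ∧ p.2 ∈ t p.1} =
      ↑((s.sigma t).map (Equiv.sigmaEquivProd ι κ).toEmbedding) := by
    ext ⟨i, j⟩
    simp
  rw [this, Set.ncard_coe_finset, card_map, card_sigma]

section Dual

variable {V : Type*} [AddCommGroup V] [Module ℝ V]

@[simp]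
lemma dAct_apply (w : V ≃ₗ[ℝ] V) (α : Dual ℝ V) (v : V) : dAct w α v = α (w.symm v) := rfl

lemma dAct_inv_apply (w : V ≃ₗ[ℝ] V) (α : Dual ℝ V) (v : V) : dAct w⁻¹ α v = α (w v) := rfl

lemma dAct_mul (u w : V ≃ₗ[ℝ] V) (α : Dual ℝ V) : dAct (u * w) α = dAct u (dAct w α) := rfl

lemma dAct_one (α : Dual ℝ V) : dAct 1 α = α := rfl

lemma dAct_neg (w : V ≃ₗ[ℝ] V) (α : Dual ℝ V) : dAct w (-α) = -dAct w α := rfl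

lemma dAct_dAct_of_mul_eq_one {w w' : V ≃ₗ[ℝ] V} (h : w' * w = 1) (α : Dual ℝ V) :
    dAct w' (dAct w α) = α := by
  rw [← dAct_mul, h, dAct_one]

lemma dAct_injective (w : V ≃ₗ[ℝ] V) : Function.Injective (dAct w) :=
  Function.LeftInverse.injective (dAct_dAct_of_mul_eq_one (inv_mul_cancel w))

lemma dAct_reflection {f : Dual ℝ V} {x : V} (h : f x = 2) (α : Dual ℝ V) :
    dAct (Module.reflection h) α = α - α x • f := by
  ext v
  simp [Module.reflection_symm, Module.reflection_apply, mul_comm]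

/-- For an open alcove `S` this says `k < α < k + 1` on `S`: the hyperplanes `H_{α,n}` lying
above `S` are exactly those with `n ≥ k + 1`, those below it exactly those with `n ≤ k`. -/
def IsStrip (α : Dual ℝ V) (S : Set V) (k : ℤ) : Prop :=
  ∀ n : ℤ, ((∀ v ∈ S, α v < n) ↔ k + 1 ≤ n) ∧ ((∀ v ∈ S, (n : ℝ) < α v) ↔ n ≤ k)

lemma IsStrip.neg {α : Dual ℝ V} {S : Set V} {k : ℤ} (h : IsStrip α S k) :
    IsStrip (-α) S (-k - 1) := by
  intro n
  have hn := h (-n)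
  push_cast at hn
  simp only [LinearMap.neg_apply, neg_lt, lt_neg]
  exact ⟨hn.2.trans (by omega), hn.1.trans (by omega)⟩

lemma IsStrip.image_affT {α : Dual ℝ V} {u : V ≃ₗ[ℝ] V} {S : Set V} {k m : ℤ} {ν : V}
    (h : IsStrip (dAct u⁻¹ α) S k) (hm : α ν = m) : IsStrip α (affT ν u '' S) (k + m) := by
  intro n
  have hn := h (n - m)
  push_cast at hn
  simp only [Set.forall_mem_image, affT, map_add, hm, ← dAct_inv_apply, ← lt_sub_iff_add_lt,
    ← sub_lt_iff_lt_add]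
  exact ⟨hn.1.trans (by omega), hn.2.trans (by omega)⟩

lemma IsStrip.sepBy_iff {α : Dual ℝ V} {S T : Set V} {j k : ℤ} (hS : IsStrip α S j)
    (hT : IsStrip α T k) (n : ℤ) : SepBy α n S T ↔ n ∈ Ioc (min j k) (max j k) := by
  rw [SepBy, (hS n).1, (hS n).2, (hT n).1, (hT n).2, mem_Ioc]
  omega

end Dual

namespace RootSystemCtx

variable {V : Type*} [AddCommGroup V] [Module ℝ V] [FiniteDimensional ℝ V] {C : RootSystemCtx V}

@[simp]
lemma mem_invSet {w : V ≃ₗ[ℝ] V} {β : Dual ℝ V} :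
    β ∈ C.invSet w ↔ β ∈ C.Pos ∧ -dAct w β ∈ C.Pos := by
  simp [invSet]

lemma neg_notMem_pos {α : Dual ℝ V} (h : α ∈ C.Pos) : -α ∉ C.Pos := by
  rcases C.pos_partition α (C.pos_subset h) with ⟨_, h'⟩ | ⟨_, h'⟩
  · exact h'
  · exact absurd h h'

lemma mem_pos_or_neg_mem_pos {α : Dual ℝ V} (h : α ∈ C.Φ) : α ∈ C.Pos ∨ -α ∈ C.Pos := by
  rcases C.pos_partition α h with ⟨h', _⟩ | ⟨h', _⟩
  · exact Or.inl h'
  · exact Or.inr h'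

lemma eq_reflection_of_apply {α : Dual ℝ V} (hα : α ∈ C.Φ) {g : V ≃ₗ[ℝ] V}
    (hg : ∀ v, g v = v - α v • C.coroot α) : g = Module.reflection (C.coroot_self α hα) :=
  LinearEquiv.ext fun v => (hg v).trans (Module.reflection_apply _ _).symm

lemma reflection_mem_W {α : Dual ℝ V} (hα : α ∈ C.Φ) :
    Module.reflection (C.coroot_self α hα) ∈ C.W := by
  rw [C.W_gen]
  exact Subgroup.subset_closure ⟨α, hα, fun v => Module.reflection_apply _ _⟩

lemma dAct_mem_Φ {w : V ≃ₗ[ℝ] V} (hw : w ∈ C.W) {β : Dual ℝ V} (hβ : β ∈ C.Φ) :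
    dAct w β ∈ C.Φ := by
  rw [C.W_gen] at hw
  induction hw using Subgroup.closure_induction'' generalizing β with
  | mem g hg =>
    obtain ⟨α, hα, hgα⟩ := hg
    rw [eq_reflection_of_apply hα hgα, dAct_reflection]
    exact C.root_reflect_mem α hα β hβ
  | inv_mem g hg =>
    obtain ⟨α, hα, hgα⟩ := hg
    rw [eq_reflection_of_apply hα hgα, Module.reflection_inv, dAct_reflection]
    exact C.root_reflect_mem α hα β hβ
  | one => exact hβ
  | mul x y _ _ hx hy => exact hx (hy hβ)

lemma dAct_mem_pos_of_notMem_invSet {w : V ≃ₗ[ℝ] V} (hw : w ∈ C.W) {β : Dual ℝ V}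
    (hβ : β ∈ C.Pos) (h : β ∉ C.invSet w) : dAct w β ∈ C.Pos :=
  (mem_pos_or_neg_mem_pos (C.dAct_mem_Φ hw (C.pos_subset hβ))).resolve_right
    fun h' => h (mem_invSet.2 ⟨hβ, h'⟩)

variable (C) in
open Classical in
noncomputable def toPos (α : Dual ℝ V) : Dual ℝ V := if α ∈ C.Pos then α else -α

lemma toPos_of_mem {α : Dual ℝ V} (h : α ∈ C.Pos) : C.toPos α = α := by
  simp [toPos, h]

lemma toPos_of_notMem {α : Dual ℝ V} (h : α ∉ C.Pos) : C.toPos α = -α := by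
  simp [toPos, h]

lemma toPos_of_neg_mem {α : Dual ℝ V} (h : -α ∈ C.Pos) : C.toPos α = -α :=
  toPos_of_notMem (by simpa using neg_notMem_pos h)

lemma toPos_mem {α : Dual ℝ V} (h : α ∈ C.Φ) : C.toPos α ∈ C.Pos := by
  rcases mem_pos_or_neg_mem_pos h with h' | h'
  · rwa [toPos_of_mem h']
  · rwa [toPos_of_neg_mem h']

lemma toPos_dAct_toPos_dAct {w w' : V ≃ₗ[ℝ] V} (h : w' * w = 1) {α : Dual ℝ V}
    (hα : α ∈ C.Pos) : C.toPos (dAct w' (C.toPos (dAct w α))) = α := by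
  by_cases hw : dAct w α ∈ C.Pos
  · rw [toPos_of_mem hw, dAct_dAct_of_mul_eq_one h, toPos_of_mem hα]
  · rw [toPos_of_notMem hw, dAct_neg, dAct_dAct_of_mul_eq_one h,
      toPos_of_neg_mem (by rwa [neg_neg]), neg_neg]

variable (C) in
lemma chamber_nonempty : Set.Nonempty C.chamber := by
  obtain ⟨f, hf⟩ := Module.exists_dual_forall_apply_eq_one (K := ℝ) (v := id)
    (s := (C.Delta : Set (Dual ℝ V))) C.delta_indep
  refine ⟨(Module.evalEquiv ℝ V).symm f, fun α hα => ?_⟩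
  obtain ⟨c, hc⟩ := C.pos_of_delta α hα
  have hc0 : ∃ β ∈ C.Delta, c β ≠ 0 := by
    by_contra! h
    exact C.root_ne_zero α (C.pos_subset hα) (hc.trans (sum_eq_zero fun β hβ => by simp [h β hβ]))
  obtain ⟨β, hβ, hcβ⟩ := hc0
  rw [hc, LinearMap.sum_apply]
  refine sum_pos' (fun γ hγ => ?_) ⟨β, hβ, ?_⟩ <;>
    simp only [LinearMap.smul_apply, Module.apply_evalEquiv_symm_apply, smul_eq_mul]
  · rw [show f γ = 1 from hf γ hγ]
    positivity
  · rw [show f β = 1 from hf β hβ, mul_one]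
    exact_mod_cast Nat.pos_of_ne_zero hcβ

variable (C) in
lemma alcove_nonempty : Set.Nonempty C.alcove := by
  obtain ⟨v, hv⟩ := C.chamber_nonempty
  set S := ∑ α ∈ C.Pos, α v
  refine ⟨(S + 1)⁻¹ • v, fun α hα => ?_⟩
  have hS : α v ≤ S := single_le_sum (fun β hβ => (hv β hβ).le) hα
  have hS1 : 0 < S + 1 := by linarith [hv α hα]
  rw [map_smul, smul_eq_mul, inv_mul_eq_div]
  exact ⟨div_pos (hv α hα) hS1, (div_lt_one hS1).2 (by linarith)⟩

lemma isStrip_alcove_of_mem_pos {α : Dual ℝ V} (hα : α ∈ C.Pos) : IsStrip α C.alcove 0 := by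
  obtain ⟨v₀, hv₀⟩ := C.alcove_nonempty
  obtain ⟨h0, h1⟩ := hv₀ α hα
  refine fun n => ⟨⟨fun h => ?_, fun h v hv => ?_⟩, ⟨fun h => ?_, fun h v hv => ?_⟩⟩
  · have : (0 : ℝ) < n := h0.trans (h v₀ hv₀)
    have : (0 : ℤ) < n := by exact_mod_cast this
    omega
  · have : (1 : ℝ) ≤ n := by exact_mod_cast (by omega : (1 : ℤ) ≤ n)
    linarith [(hv α hα).2]
  · have : (n : ℝ) < 1 := (h v₀ hv₀).trans h1
    have : n < (1 : ℤ) := by exact_mod_cast this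
    omega
  · have : (n : ℝ) ≤ 0 := by exact_mod_cast h
    linarith [(hv α hα).1]

open Classical in
lemma isStrip_alcove {α : Dual ℝ V} (hα : α ∈ C.Φ) :
    IsStrip α C.alcove (if α ∈ C.Pos then 0 else -1) := by
  split_ifs with h
  · exact isStrip_alcove_of_mem_pos h
  · simpa using (isStrip_alcove_of_mem_pos ((mem_pos_or_neg_mem_pos hα).resolve_left h)).neg

lemma isIntegral_neg_apply {u : V ≃ₗ[ℝ] V} (hu : u ∈ C.W) {μ : V} (hμ : C.IsIntegral μ) :
    C.IsIntegral (-(u μ)) := by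
  intro α hα
  obtain ⟨n, hn⟩ := hμ _ (C.dAct_mem_Φ (inv_mem hu) hα)
  exact ⟨-n, by rw [map_neg, ← dAct_inv_apply, hn, Int.cast_neg]⟩

open Classical in
lemma affLen_affT {u : V ≃ₗ[ℝ] V} (hu : u ∈ C.W) {ν : V} (hν : C.IsIntegral ν) :
    (C.affLen (affT ν u) : ℝ) = ∑ α ∈ C.Pos, |α ν - if dAct u⁻¹ α ∈ C.Pos then 0 else 1| := by
  set k : Dual ℝ V → ℤ := fun α => (if dAct u⁻¹ α ∈ C.Pos then 0 else -1) + ⌊α ν⌋ with hk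
  have hfloor : ∀ α ∈ C.Φ, α ν = ⌊α ν⌋ := fun α hα => by
    obtain ⟨n, hn⟩ := hν α hα
    rw [hn, Int.floor_intCast]
  have hsep : ∀ α ∈ C.Pos, ∀ n : ℤ, SepBy α n C.alcove (affT ν u '' C.alcove) ↔
      n ∈ Ioc (min 0 (k α)) (max 0 (k α)) := fun α hα =>
    (isStrip_alcove_of_mem_pos hα).sepBy_iff
      ((isStrip_alcove (C.dAct_mem_Φ (inv_mem hu) (C.pos_subset hα))).image_affT
        (hfloor α (C.pos_subset hα)))
  have hset : {p : Dual ℝ V × ℤ | p.1 ∈ C.Pos ∧ SepBy p.1 p.2 C.alcove (affT ν u '' C.alcove)} =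
      {p | p.1 ∈ C.Pos ∧ p.2 ∈ Ioc (min 0 (k p.1)) (max 0 (k p.1))} := by
    ext ⟨α, n⟩
    exact and_congr_right fun hα => hsep α hα n
  rw [affLen, sepCount, hset,
    ncard_setOf_fst_mem_and_snd_mem C.Pos fun α => Ioc (min 0 (k α)) (max 0 (k α)), Nat.cast_sum]
  refine sum_congr rfl fun α hα => ?_
  rw [Int.card_Ioc, show (max 0 (k α) - min 0 (k α)).toNat = (k α).natAbs by omega,
    Nat.cast_natAbs, Int.cast_abs, hk, Int.cast_add, ← hfloor α (C.pos_subset hα)]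
  split_ifs <;> push_cast <;> ring_nf

open Classical in
lemma affLen_affT_neg_apply {u : V ≃ₗ[ℝ] V} (hu : u ∈ C.W) {μ : V} (hμ : C.IsIntegral μ) :
    (C.affLen (affT (-(u μ)) u) : ℝ) =
      ∑ β ∈ C.Pos, |β μ - if -dAct u β ∈ C.Pos then 1 else 0| := by
  rw [affLen_affT hu (isIntegral_neg_apply hu hμ)]
  refine sum_nbij' (fun α => C.toPos (dAct u⁻¹ α)) (fun β => C.toPos (dAct u β))
    (fun α hα => toPos_mem (C.dAct_mem_Φ (inv_mem hu) (C.pos_subset hα)))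
    (fun β hβ => toPos_mem (C.dAct_mem_Φ hu (C.pos_subset hβ)))
    (fun α hα => toPos_dAct_toPos_dAct (mul_inv_cancel u) hα)
    (fun β hβ => toPos_dAct_toPos_dAct (inv_mul_cancel u) hβ) fun α hα => ?_
  have hαμ : α (-(u μ)) = -dAct u⁻¹ α μ := by rw [map_neg, dAct_inv_apply]
  have hu' : dAct u (dAct u⁻¹ α) = α := dAct_dAct_of_mul_eq_one (mul_inv_cancel u) α
  rcases mem_pos_or_neg_mem_pos (C.dAct_mem_Φ (inv_mem hu) (C.pos_subset hα)) with h | h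
  · rw [toPos_of_mem h, if_pos h, hu', if_neg (neg_notMem_pos hα), hαμ, sub_zero, sub_zero,
      abs_neg]
  · rw [toPos_of_neg_mem h, if_neg fun h' => neg_notMem_pos h' h, dAct_neg, hu', neg_neg,
      if_pos hα, hαμ, LinearMap.neg_apply]

lemma affLen_affT_neg_apply_add_len {u : V ≃ₗ[ℝ] V} (hu : u ∈ C.W) {μ : V}
    (hμ : C.IsIntegral μ) (hdom : C.IsDominant μ) (hinv : ∀ β ∈ C.invSet u, β μ ≠ 0) :
    (C.affLen (affT (-(u μ)) u) : ℝ) + C.len u = ∑ β ∈ C.Pos, β μ := by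
  rw [affLen_affT_neg_apply hu hμ, len, invSet, card_filter, Nat.cast_sum, ← sum_add_distrib]
  refine sum_congr rfl fun β hβ => ?_
  split_ifs with h
  · obtain ⟨n, hn⟩ := hμ β (C.pos_subset hβ)
    have h0 : (0 : ℤ) ≤ n := by exact_mod_cast hn ▸ hdom β hβ
    have h1 : n ≠ 0 := by exact_mod_cast hn ▸ hinv β (mem_invSet.2 ⟨hβ, h⟩)
    have : (1 : ℝ) ≤ β μ := by
      rw [hn]
      exact_mod_cast (by omega : (1 : ℤ) ≤ n)
    rw [abs_of_nonneg (by linarith)]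
    push_cast
    ring
  · rw [sub_zero, abs_of_nonneg (hdom β hβ)]
    push_cast
    ring

open Classical in
lemma len_mul {x y : V ≃ₗ[ℝ] V} (hx : x ∈ C.W) (hy : y ∈ C.W) :
    C.len (x * y) = (C.invSet x ∆ C.invSet y⁻¹).card := by
  have hpos : ∀ β ∈ C.invSet x ∆ C.invSet y⁻¹, β ∈ C.Pos := fun β hβ => by
    rcases mem_symmDiff.1 hβ with ⟨h, -⟩ | ⟨h, -⟩ <;> exact (mem_invSet.1 h).1
  refine card_nbij' (fun α => C.toPos (dAct y α)) (fun β => C.toPos (dAct y⁻¹ β)) ?_ ?_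
    (fun α hα => toPos_dAct_toPos_dAct (inv_mul_cancel y) (mem_invSet.1 hα).1)
    (fun β hβ => toPos_dAct_toPos_dAct (mul_inv_cancel y) (hpos β hβ))
  · intro α hα
    simp only [mem_coe, mem_invSet, dAct_mul, mem_symmDiff] at hα ⊢
    obtain ⟨hα, hxy⟩ := hα
    have hyα : dAct y⁻¹ (dAct y α) = α := dAct_dAct_of_mul_eq_one (inv_mul_cancel y) α
    rcases mem_pos_or_neg_mem_pos (C.dAct_mem_Φ hy (C.pos_subset hα)) with h | h
    · rw [toPos_of_mem h, hyα]
      exact Or.inl ⟨⟨h, hxy⟩, fun h' => neg_notMem_pos hα h'.2⟩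
    · rw [toPos_of_neg_mem h, dAct_neg, dAct_neg, hyα, neg_neg, neg_neg]
      exact Or.inr ⟨⟨h, hα⟩, fun h' => neg_notMem_pos h'.2 hxy⟩
  · intro β hβ
    simp only [mem_coe, mem_symmDiff] at hβ ⊢
    have hyβ : dAct y (dAct y⁻¹ β) = β := dAct_dAct_of_mul_eq_one (mul_inv_cancel y) β
    rcases hβ with ⟨hβx, hβy⟩ | ⟨hβy, hβx⟩
    · obtain ⟨hβ, hxβ⟩ := mem_invSet.1 hβx
      have h := C.dAct_mem_pos_of_notMem_invSet (inv_mem hy) hβ hβy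
      rw [toPos_of_mem h, mem_invSet, dAct_mul, hyβ]
      exact ⟨h, hxβ⟩
    · obtain ⟨hβ, h⟩ := mem_invSet.1 hβy
      rw [toPos_of_neg_mem h, mem_invSet, dAct_mul, dAct_neg, dAct_neg, hyβ, neg_neg]
      exact ⟨h, C.dAct_mem_pos_of_notMem_invSet hx hβ hβx⟩

lemma len_mul_add_len_of_subset {x y : V ≃ₗ[ℝ] V} (hx : x ∈ C.W) (hy : y ∈ C.W)
    (h : C.invSet x ⊆ C.invSet y⁻¹) : C.len (x * y) + C.len x = C.len y⁻¹ := by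
  classical
  rw [len_mul hx hy, symmDiff_of_le h]
  exact card_sdiff_add_card_eq_card h

lemma neg_dAct_reflection_mem_invSet {w : V ≃ₗ[ℝ] V} (hw : w ∈ C.W) {β δ : Dual ℝ V}
    (h : β (C.coroot β) = 2) (hβ : β ∈ C.invSet w) (hδ : δ ∈ C.invSet (Module.reflection h))
    (hδw : δ ∉ C.invSet w) : -dAct (Module.reflection h) δ ∈ C.invSet w := by
  obtain ⟨hβpos, hwβ⟩ := mem_invSet.1 hβ
  obtain ⟨hδpos, hsδ⟩ := mem_invSet.1 hδ
  by_contra hsδw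
  obtain ⟨v₀, hv₀⟩ := C.chamber_nonempty
  -- `δ + (-s_β δ) = ⟨δ, β^∨⟩ β` is positive on the chamber, so `⟨δ, β^∨⟩ > 0`; after applying
  -- `w` the left side is still positive there, while `w β` is negative.
  have hsum : ∀ v, δ v + (-dAct (Module.reflection h) δ) v = δ (C.coroot β) * β v := by
    intro v
    simp only [dAct_reflection, LinearMap.neg_apply, LinearMap.sub_apply, LinearMap.smul_apply,
      smul_eq_mul]
    ring
  have hc : 0 < δ (C.coroot β) := by
    have := hsum v₀
    nlinarith [hv₀ δ hδpos, hv₀ _ hsδ, hv₀ β hβpos]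
  have hw₁ := hv₀ _ (C.dAct_mem_pos_of_notMem_invSet hw hδpos hδw)
  have hw₂ := hv₀ _ (C.dAct_mem_pos_of_notMem_invSet hw hsδ hsδw)
  have hw₃ := hv₀ _ hwβ
  have := hsum (w.symm v₀)
  simp only [dAct_apply, LinearMap.neg_apply] at hw₁ hw₂ hw₃ this
  nlinarith [mul_pos hc hw₃]

lemma len_mul_reflection_lt {w : V ≃ₗ[ℝ] V} (hw : w ∈ C.W) {β : Dual ℝ V}
    (h : β (C.coroot β) = 2) (hβ : β ∈ C.invSet w) :
    C.len (w * Module.reflection h) < C.len w := by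
  classical
  set s := Module.reflection h
  have hβpos : β ∈ C.Pos := (mem_invSet.1 hβ).1
  have hss : ∀ δ, dAct s (dAct s δ) = δ := dAct_dAct_of_mul_eq_one (inv_mul_cancel s)
  have hsβ : -dAct s β = β := by
    rw [dAct_reflection, h]
    module
  have hβs : β ∈ C.invSet s := mem_invSet.2 ⟨hβpos, by rw [hsβ]; exact hβpos⟩
  have hpair : (C.invSet s \ C.invSet w).card ≤ ((C.invSet w ∩ C.invSet s).erase β).card := by
    refine card_le_card_of_injOn (fun δ => -dAct s δ) (fun δ hδ => ?_)
      (fun δ _ δ' _ hδδ' => dAct_injective s (neg_injective hδδ'))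
    obtain ⟨hδs, hδw⟩ := mem_sdiff.1 hδ
    refine mem_erase.2 ⟨fun hδβ => hδw ?_, mem_inter.2 ⟨?_, ?_⟩⟩
    · rwa [dAct_injective s (neg_injective (hδβ.trans hsβ.symm))]
    · exact C.neg_dAct_reflection_mem_invSet hw h hβ hδs hδw
    · rw [mem_invSet, dAct_neg, hss, neg_neg]
      exact ⟨(mem_invSet.1 hδs).2, (mem_invSet.1 hδs).1⟩
  have hlen : C.len (w * s) = (C.invSet w ∆ C.invSet s).card :=
    len_mul hw (reflection_mem_W (C.pos_subset hβpos))
  rw [hlen, len, symmDiff_def, sup_eq_union, card_union_of_disjoint disjoint_sdiff_sdiff]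
  rw [card_erase_of_mem (mem_inter.2 ⟨hβ, hβs⟩)] at hpair
  have := card_sdiff_add_card_inter (C.invSet w) (C.invSet s)
  have := card_pos.2 ⟨β, mem_inter.2 ⟨hβ, hβs⟩⟩
  omega

lemma IsMinRep.apply_ne_zero {w : V ≃ₗ[ℝ] V} {lam : V} (hmin : C.IsMinRep w lam)
    {β : Dual ℝ V} (hβ : β ∈ C.invSet w) : β lam ≠ 0 := by
  intro h0
  have hβΦ : β ∈ C.Φ := C.pos_subset (mem_invSet.1 hβ).1
  have hfix : Module.reflection (C.coroot_self β hβΦ) lam = lam := by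
    rw [Module.reflection_apply, h0, zero_smul, sub_zero]
  exact (hmin.2 _ (reflection_mem_W hβΦ) hfix).not_gt (len_mul_reflection_lt hmin.1 _ hβ)

open Classical in
lemma invSet_inv_eq_filter {wstar : V ≃ₗ[ℝ] V} (hws : wstar ∈ C.W) {μ : V}
    (hμ : C.IsIntegral μ) (hdom : C.IsDominant μ)
    (hcham : (fun v => -μ + v) '' C.alcove ⊆ ⇑wstar '' C.chamber) :
    C.invSet wstar⁻¹ = C.Pos.filter fun β => β μ ≠ 0 := by
  have hbelow : ∀ α ∈ C.Pos, ∀ v ∈ C.alcove, dAct wstar α μ < dAct wstar α v := by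
    intro α hα v hv
    obtain ⟨c, hc, hcv⟩ := hcham ⟨v, hv, rfl⟩
    have := hc α hα
    rw [(LinearEquiv.eq_symm_apply wstar).2 hcv] at this
    simp only [dAct_apply, map_add, map_neg] at this ⊢
    linarith
  ext β
  rw [mem_invSet, mem_filter]
  refine and_congr_right fun hβ => ?_
  have hββ : dAct wstar (dAct wstar⁻¹ β) = β := dAct_dAct_of_mul_eq_one (mul_inv_cancel wstar) β
  obtain ⟨n, hn⟩ := hμ β (C.pos_subset hβ)
  have hstrip := isStrip_alcove_of_mem_pos hβ n
  rcases mem_pos_or_neg_mem_pos (C.dAct_mem_Φ (inv_mem hws) (C.pos_subset hβ)) with h | h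
  · have hgt := hbelow _ h
    rw [hββ, hn] at hgt
    have hn0 : (0 : ℝ) ≤ n := hn ▸ hdom β hβ
    have : n = 0 := le_antisymm (hstrip.2.1 hgt) (by exact_mod_cast hn0)
    exact iff_of_false (neg_notMem_pos h) (by simp [hn, this])
  · have hlt := hbelow _ h
    simp only [dAct_neg, hββ, LinearMap.neg_apply, neg_lt_neg_iff, hn] at hlt
    have := hstrip.1.1 hlt
    exact iff_of_true h (by rw [hn]; exact_mod_cast (by omega : n ≠ 0))

end RootSystemCtx

/-- Let `μ` be a dominant integral coweight, `w₁` a minimal coset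
representative for `μ`, and `w_* ∈ W₀` the element with `−μ + A ⊆ w_*(C)`.  Then
`ℓ(t_{−w₁(μ)}w₁) = ℓ(w₁w_*) + ℓ(w_*⁻¹ t_{−μ})`, where `ℓ(w₁w_*)` is the finite Weyl
group length and the other two are separating-hyperplane counts of the corresponding
affine transformations. -/
theorem affine_length_factorization
    {V : Type*} [AddCommGroup V] [Module ℝ V] [FiniteDimensional ℝ V]
    (C : RootSystemCtx V) (μ : V)
    (hint : C.IsIntegral μ) (hdom : C.IsDominant μ)
    (w₁ : V ≃ₗ[ℝ] V) (hmin : C.IsMinRep w₁ μ)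
    (wstar : V ≃ₗ[ℝ] V) (hws : wstar ∈ C.W)
    (hcham : (fun v => -μ + v) '' C.alcove ⊆ ⇑wstar '' C.chamber) :
    C.affLen (affT (-(w₁ μ)) w₁)
      = C.len (w₁ * wstar) + C.affLen (affT (-(wstar⁻¹ μ)) wstar⁻¹) := by
  have hstar := C.invSet_inv_eq_filter hws hint hdom hcham
  have hsub : C.invSet w₁ ⊆ C.invSet wstar⁻¹ := fun β hβ =>
    hstar ▸ mem_filter.2 ⟨(RootSystemCtx.mem_invSet.1 hβ).1, hmin.apply_ne_zero hβ⟩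
  have h₁ := C.affLen_affT_neg_apply_add_len hmin.1 hint hdom fun β => hmin.apply_ne_zero
  have h₂ := C.affLen_affT_neg_apply_add_len (inv_mem hws) hint hdom fun β hβ => by
    rw [hstar] at hβ
    exact (mem_filter.1 hβ).2
  have h₃ : (C.len (w₁ * wstar) : ℝ) + C.len w₁ = C.len wstar⁻¹ := by
    exact_mod_cast C.len_mul_add_len_of_subset hmin.1 hws hsub
  rw [← Nat.cast_inj (R := ℝ)]
  push_cast
  linarith
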